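/- Exact conditioning identity: for density matrices ρ, σ and a positive semidefinite matrix A ≤ Id with tr(ρA), tr(σA) > 0, one has ‖√ρ A √σ‖₁² = F(ρ|√A, σ|√A) · tr(σA) · tr(ρA). -/

import Mathlib

open Matrix ComplexOrder

/-- The positive semidefinite square root, as `Matrix.PosSemidef.sqrt` was defined in Mathlib (Dec 2024). -/
noncomputable def Matrix.PosSemidef.sqrt {n 𝕜 : Type*} [Fintype n] [RCLike 𝕜] [DecidableEq n]
    {A : Matrix n n 𝕜} (hA : A.PosSemidef) : Matrix n n 𝕜 :=
  (hA.1.eigenvectorUnitary : Matrix n n 𝕜) * diagonal ((↑) ∘ Real.sqrt ∘ hA.1.eigenvalues : n → 𝕜) *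
    (star hA.1.eigenvectorUnitary : Matrix n n 𝕜)

/-- The Schatten 1-norm (trace norm): ‖M‖₁ = tr √(MᴴM). -/
noncomputable def traceNorm {n m : Type*} [Fintype n] [Fintype m] [DecidableEq m]
    (M : Matrix n m ℂ) : ℝ :=
  ((Matrix.posSemidef_conjTranspose_mul_self M).sqrt.trace).re

/-!
Put `S = √A`, `N = √ρ S` and `K = √σ S`. Then `S ρ S = NᴴN`, `S σ S = KᴴK` and
`√ρ A √σ = N Kᴴ`, while the conditioned states are `tr(ρA)⁻¹ NᴴN` and `tr(σA)⁻¹ KᴴK`.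
The trace norm of `M` depends only on `MᴴM`, and it is invariant under `M ↦ Mᴴ` because `MᴴM`
and `MMᴴ` have the same characteristic polynomial. Hence `√(NᴴN)` may be traded for `N` on the
left of a product and `√(KᴴK)` for `Kᴴ` on the right, which gives
`‖√(NᴴN) √(KᴴK)‖₁ = ‖N Kᴴ‖₁`; the scalars come out of the trace norm as `√(tr(ρA)⁻¹ tr(σA)⁻¹)`.
-/

open scoped MatrixOrder

theorem CFC.sqrt_smul {A : Type*} [PartialOrder A] [NonUnitalRing A] [TopologicalSpace A]
    [StarRing A] [Module ℝ A] [SMulCommClass ℝ A A] [IsScalarTower ℝ A A] [StarOrderedRing A]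
    [NonUnitalContinuousFunctionalCalculus ℝ A IsSelfAdjoint] [NonnegSpectrumClass ℝ A]
    [IsSemitopologicalRing A] [T2Space A] [PosSMulMono ℝ A]
    {r : ℝ} (hr : 0 ≤ r) {a : A} (ha : 0 ≤ a) : CFC.sqrt (r • a) = √r • CFC.sqrt a := by
  refine CFC.sqrt_unique ?_ (smul_nonneg (Real.sqrt_nonneg r) (CFC.sqrt_nonneg a))
  rw [smul_mul_smul_comm, Real.mul_self_sqrt hr, CFC.sqrt_mul_sqrt_self a ha]

namespace Matrix.PosSemidef

variable {n 𝕜 : Type*} [Fintype n] [DecidableEq n] [RCLike 𝕜]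

theorem sqrt_eq_cfcSqrt {P : Matrix n n 𝕜} (hP : P.PosSemidef) : hP.sqrt = CFC.sqrt P := by
  rw [CFC.sqrt_eq_real_sqrt P hP.nonneg, cfcₙ_eq_cfc, hP.1.cfc_eq]
  rfl

theorem trace_sqrt_eq_sum_roots_charpoly {P : Matrix n n 𝕜} (hP : P.PosSemidef) :
    hP.sqrt.trace = (P.charpoly.roots.map fun z : 𝕜 ↦ (√(RCLike.re z) : 𝕜)).sum := by
  rw [sqrt, trace_mul_cycle, Unitary.coe_star_mul_self, one_mul, trace_diagonal,
    hP.1.roots_charpoly_eq_eigenvalues, Multiset.map_map]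
  simp [Function.comp_def]

theorem trace_mul_nonneg {P Q : Matrix n n 𝕜} (hP : P.PosSemidef) (hQ : Q.PosSemidef) :
    0 ≤ (P * Q).trace := by
  have hS : (CFC.sqrt Q)ᴴ = CFC.sqrt Q := (CFC.sqrt_nonneg Q).isSelfAdjoint
  have := (hP.conjTranspose_mul_mul_same (CFC.sqrt Q)).trace_nonneg
  rwa [hS, trace_mul_cycle, CFC.sqrt_mul_sqrt_self Q hQ.nonneg, trace_mul_comm] at this

theorem conjTranspose_mul_self_cfcSqrt_mul {P : Matrix n n 𝕜} (hP : P.PosSemidef)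
    (S : Matrix n n 𝕜) : (CFC.sqrt P * S)ᴴ * (CFC.sqrt P * S) = Sᴴ * P * S := by
  have hS : (CFC.sqrt P)ᴴ = CFC.sqrt P := (CFC.sqrt_nonneg P).isSelfAdjoint
  rw [conjTranspose_mul, hS, Matrix.mul_assoc, ← Matrix.mul_assoc (CFC.sqrt P),
    CFC.sqrt_mul_sqrt_self P hP.nonneg, Matrix.mul_assoc]

theorem mul_cfcSqrt_mul_conjTranspose {P : Matrix n n 𝕜} (hP : P.PosSemidef)
    (X Y : Matrix n n 𝕜) : X * CFC.sqrt P * (Y * CFC.sqrt P)ᴴ = X * P * Yᴴ := by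
  have hS : (CFC.sqrt P)ᴴ = CFC.sqrt P := (CFC.sqrt_nonneg P).isSelfAdjoint
  rw [conjTranspose_mul, hS, Matrix.mul_assoc, ← Matrix.mul_assoc (CFC.sqrt P),
    CFC.sqrt_mul_sqrt_self P hP.nonneg, Matrix.mul_assoc]

/-- In the paper's notation `hcond.sqrt` is `√(ρ|√A)`, where `ρ|√A = tr(ρA)⁻¹ • √A ρ √A`. -/
theorem sqrt_conditioned_eq {ρ A : Matrix n n ℂ} (hρ : ρ.PosSemidef)
    (hA : A.PosSemidef) (hcond : (((ρ * A).trace)⁻¹ • (hA.sqrt * ρ * hA.sqrt)).PosSemidef) :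
    hcond.sqrt = ((√((ρ * A).trace.re)⁻¹ : ℝ) : ℂ) •
      CFC.sqrt ((CFC.sqrt ρ * CFC.sqrt A)ᴴ * (CFC.sqrt ρ * CFC.sqrt A)) := by
  have hS : (CFC.sqrt A)ᴴ = CFC.sqrt A := (CFC.sqrt_nonneg A).isSelfAdjoint
  have htr : 0 ≤ (ρ * A).trace := hρ.trace_mul_nonneg hA
  have hsandwich : 0 ≤ CFC.sqrt A * ρ * CFC.sqrt A := by
    simpa only [hS] using (hρ.conjTranspose_mul_mul_same (CFC.sqrt A)).nonneg
  rw [PosSemidef.sqrt_eq_cfcSqrt, hA.sqrt_eq_cfcSqrt, hρ.conjTranspose_mul_self_cfcSqrt_mul, hS,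
    Complex.eq_re_of_ofReal_le htr, ← Complex.ofReal_inv, Complex.coe_smul, Complex.coe_smul,
    CFC.sqrt_smul (inv_nonneg.mpr (Complex.nonneg_iff.mp htr).1) hsandwich, Complex.ofReal_re]

end Matrix.PosSemidef

section traceNorm

variable {n : Type*} [Fintype n] [DecidableEq n]

theorem traceNorm_eq_re_trace_cfcSqrt {m : Type*} [Fintype m] (M : Matrix m n ℂ) :
    traceNorm M = (CFC.sqrt (Mᴴ * M)).trace.re := by
  rw [traceNorm, PosSemidef.sqrt_eq_cfcSqrt]

theorem traceNorm_conjTranspose (M : Matrix n n ℂ) : traceNorm Mᴴ = traceNorm M := by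
  rw [traceNorm, traceNorm, PosSemidef.trace_sqrt_eq_sum_roots_charpoly,
    PosSemidef.trace_sqrt_eq_sum_roots_charpoly, conjTranspose_conjTranspose, charpoly_mul_comm]

theorem traceNorm_smul {m : Type*} [Fintype m] (c : ℂ) (M : Matrix m n ℂ) :
    traceNorm (c • M) = ‖c‖ * traceNorm M := by
  have hgram : (c • M)ᴴ * (c • M) = (‖c‖ ^ 2) • (Mᴴ * M) := by
    rw [conjTranspose_smul, Matrix.smul_mul, Matrix.mul_smul, smul_smul, Complex.star_def,
      RCLike.conj_mul, ← RCLike.ofReal_pow]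
    exact Complex.coe_smul _ _
  rw [traceNorm_eq_re_trace_cfcSqrt, traceNorm_eq_re_trace_cfcSqrt, hgram,
    CFC.sqrt_smul (by positivity) (posSemidef_conjTranspose_mul_self M).nonneg,
    Real.sqrt_sq (norm_nonneg c), trace_smul, ← Complex.coe_smul, smul_eq_mul,
    Complex.re_ofReal_mul]

theorem traceNorm_cfcSqrt_conjTranspose_mul_self_mul {k m : Type*} [Fintype k] [Fintype m]
    [DecidableEq m] (N : Matrix k n ℂ) (B : Matrix n m ℂ) :
    traceNorm (CFC.sqrt (Nᴴ * N) * B) = traceNorm (N * B) := by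
  have hS : (CFC.sqrt (Nᴴ * N))ᴴ = CFC.sqrt (Nᴴ * N) := (CFC.sqrt_nonneg _).isSelfAdjoint
  have hgram : (CFC.sqrt (Nᴴ * N) * B)ᴴ * (CFC.sqrt (Nᴴ * N) * B) = (N * B)ᴴ * (N * B) := by
    rw [conjTranspose_mul, conjTranspose_mul, hS, Matrix.mul_assoc,
      ← Matrix.mul_assoc (CFC.sqrt _),
      CFC.sqrt_mul_sqrt_self _ (posSemidef_conjTranspose_mul_self N).nonneg]
    simp only [Matrix.mul_assoc]
  rw [traceNorm_eq_re_trace_cfcSqrt, traceNorm_eq_re_trace_cfcSqrt, hgram]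

theorem traceNorm_mul_cfcSqrt_conjTranspose_mul_self (B K : Matrix n n ℂ) :
    traceNorm (B * CFC.sqrt (Kᴴ * K)) = traceNorm (B * Kᴴ) := by
  have hS : (CFC.sqrt (Kᴴ * K))ᴴ = CFC.sqrt (Kᴴ * K) := (CFC.sqrt_nonneg _).isSelfAdjoint
  rw [← traceNorm_conjTranspose, conjTranspose_mul, hS,
    traceNorm_cfcSqrt_conjTranspose_mul_self_mul, ← traceNorm_conjTranspose, conjTranspose_mul,
    conjTranspose_conjTranspose]

end traceNorm

theorem traceNorm_sq_eq_fidelity_cond_sqrt_general {d : ℕ} (ρ σ A : Matrix (Fin d) (Fin d) ℂ)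
    (hρ : ρ.PosSemidef)
    (hσ : σ.PosSemidef)
    (hA : A.PosSemidef)
    (hρA : 0 < ((ρ * A).trace).re) (hσA : 0 < ((σ * A).trace).re)
    (hcondρ : (((ρ * A).trace)⁻¹ • (hA.sqrt * ρ * hA.sqrt)).PosSemidef)
    (hcondσ : (((σ * A).trace)⁻¹ • (hA.sqrt * σ * hA.sqrt)).PosSemidef) :
    traceNorm (hρ.sqrt * A * hσ.sqrt) ^ 2 =
      traceNorm (hcondρ.sqrt * hcondσ.sqrt) ^ 2 * ((σ * A).trace).re * ((ρ * A).trace).re := by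
  have hσS : (CFC.sqrt σ)ᴴ = CFC.sqrt σ := (CFC.sqrt_nonneg σ).isSelfAdjoint
  have hpolar : traceNorm (CFC.sqrt ((CFC.sqrt ρ * CFC.sqrt A)ᴴ * (CFC.sqrt ρ * CFC.sqrt A)) *
      CFC.sqrt ((CFC.sqrt σ * CFC.sqrt A)ᴴ * (CFC.sqrt σ * CFC.sqrt A))) =
      traceNorm (hρ.sqrt * A * hσ.sqrt) := by
    rw [traceNorm_cfcSqrt_conjTranspose_mul_self_mul, traceNorm_mul_cfcSqrt_conjTranspose_mul_self,
      hA.mul_cfcSqrt_mul_conjTranspose, hσS, hρ.sqrt_eq_cfcSqrt, hσ.sqrt_eq_cfcSqrt]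
  rw [hρ.sqrt_conditioned_eq hA, hσ.sqrt_conditioned_eq hA, smul_mul_smul_comm, traceNorm_smul,
    hpolar, ← Complex.ofReal_mul, Complex.norm_real, Real.norm_eq_abs,
    abs_of_nonneg (by positivity), mul_pow, mul_pow, Real.sq_sqrt (inv_nonneg.mpr hρA.le),
    Real.sq_sqrt (inv_nonneg.mpr hσA.le)]
  field_simp

/-- Exact conditioning identity: ‖√ρ A √σ‖₁² = F(ρ|√A, σ|√A)·tr(σA)·tr(ρA). -/
theorem traceNorm_sq_eq_fidelity_cond_sqrt {d : ℕ} (ρ σ A : Matrix (Fin d) (Fin d) ℂ)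
    (hρ : ρ.PosSemidef) (hρ1 : ρ.trace = 1)
    (hσ : σ.PosSemidef) (hσ1 : σ.trace = 1)
    (hA : A.PosSemidef) (hA1 : (1 - A).PosSemidef)
    (hρA : 0 < ((ρ * A).trace).re) (hσA : 0 < ((σ * A).trace).re)
    (hcondρ : (((ρ * A).trace)⁻¹ • (hA.sqrt * ρ * hA.sqrt)).PosSemidef)
    (hcondσ : (((σ * A).trace)⁻¹ • (hA.sqrt * σ * hA.sqrt)).PosSemidef) :
    traceNorm (hρ.sqrt * A * hσ.sqrt) ^ 2 =
      traceNorm (hcondρ.sqrt * hcondσ.sqrt) ^ 2 * ((σ * A).trace).re * ((ρ * A).trace).re :=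
  traceNorm_sq_eq_fidelity_cond_sqrt_general ρ σ A hρ hσ hA hρA hσA hcondρ hcondσ
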